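/- arXiv:2305.03988 — 2 statements merged into one kernel-verified Lean document; each statement's English description precedes it below -/
import Mathlib

section
/- Let d ≥ 2. There exists ε₀ ∈ (0,1] such that for every ε ∈ (0, ε₀) and every H¹(𝒢_ε^d)-function u: | ‖u‖²_{L²(𝒢_ε^d)} − ‖ũ‖²_{L²(𝒢_ε^d)} | ≤ 3 ε ( ‖u‖²_{L²(𝒢_ε^d)} + ‖u'‖²_{L²(𝒢_ε^d)} ), where ũ is the piecewise-linear interpolation of u. (This is Lemma 4.2.) -/
open MeasureTheory ENNReal

noncomputable section

/-- Points of `ℝ^d` (with the Euclidean metric). -/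
abbrev Pt (d : ℕ) := EuclideanSpace ℝ (Fin d)

/-- `X_ε^j`: the union of all lines parallel to the `j`-th coordinate axis through points
of `ε ℤ^d`. -/
def lineSet (d : ℕ) (ε : ℝ) (j : Fin d) : Set (Pt d) :=
  {x | ∀ i, i ≠ j → ∃ n : ℤ, x i = ε * n}

/-- The `d`-dimensional cubic grid `𝒢_ε^d` of edgelength `ε`. -/
def grid (d : ℕ) (ε : ℝ) : Set (Pt d) := ⋃ j : Fin d, lineSet d ε j

/-- Integral over the grid with respect to the 1-dimensional Hausdorff measure of `ℝ^d`,
as a value in `[0,∞]`. -/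
def gridInt (d : ℕ) (ε : ℝ) (f : Pt d → ℝ) : ℝ≥0∞ :=
  ∫⁻ x in grid d ε, ENNReal.ofReal (f x) ∂μH[1]

/-- `‖u‖²_{L²(𝒢_ε^d)}`, as a value in `[0,∞]`. -/
def gridL2sq (d : ℕ) (ε : ℝ) (u : Pt d → ℝ) : ℝ≥0∞ := gridInt d ε (fun x => (u x) ^ 2)

/-- `‖u‖_{L^q(𝒢_ε^d)}^q`, as a value in `[0,∞]`. -/
def gridLq (d : ℕ) (ε q : ℝ) (u : Pt d → ℝ) : ℝ≥0∞ := gridInt d ε (fun x => |u x| ^ q)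

/-- Update the `j`-th coordinate of a point of `ℝ^d`. -/
def upd {d : ℕ} (y : Pt d) (j : Fin d) (t : ℝ) : Pt d := WithLp.toLp 2 (Function.update y j t)

/-- `u` is an `H¹(𝒢_ε^d)`-function with edge derivative `g`: both are Borel, on every edge
of the grid `u` is absolutely continuous with derivative `g` (expressed via the fundamental
theorem of calculus with `g` locally integrable on edges), and `u, g ∈ L²(𝒢_ε^d)`. -/
structure IsGridH1 (d : ℕ) (ε : ℝ) (u g : Pt d → ℝ) : Prop where
  meas_u : Measurable u
  meas_g : Measurable g
  intInt : ∀ (j : Fin d) (y : Pt d), (∀ i, i ≠ j → ∃ m : ℤ, y i = ε * m) →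
    ∀ n : ℤ, IntervalIntegrable (fun t => g (upd y j t)) volume (ε * n) (ε * (n + 1))
  ftc : ∀ (j : Fin d) (y : Pt d), (∀ i, i ≠ j → ∃ m : ℤ, y i = ε * m) →
    ∀ n : ℤ, ∀ s ∈ Set.Icc (ε * n) (ε * (n + 1)), ∀ t ∈ Set.Icc (ε * n) (ε * (n + 1)),
      u (upd y j t) - u (upd y j s) = ∫ r in s..t, g (upd y j r)
  finL2u : gridL2sq d ε u ≠ ∞
  finL2g : gridL2sq d ε g ≠ ∞

/-- `u` is a `W^{1,1}(𝒢_1^d)`-function with edge derivative `g`. -/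
structure IsGridW11 (d : ℕ) (u g : Pt d → ℝ) : Prop where
  meas_u : Measurable u
  meas_g : Measurable g
  intInt : ∀ (j : Fin d) (y : Pt d), (∀ i, i ≠ j → ∃ m : ℤ, y i = (m : ℝ)) →
    ∀ n : ℤ, IntervalIntegrable (fun t => g (upd y j t)) volume (n : ℝ) ((n : ℝ) + 1)
  ftc : ∀ (j : Fin d) (y : Pt d), (∀ i, i ≠ j → ∃ m : ℤ, y i = (m : ℝ)) →
    ∀ n : ℤ, ∀ s ∈ Set.Icc (n : ℝ) ((n : ℝ) + 1), ∀ t ∈ Set.Icc (n : ℝ) ((n : ℝ) + 1),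
      u (upd y j t) - u (upd y j s) = ∫ r in s..t, g (upd y j r)
  finL1u : gridInt d 1 (fun x => |u x|) ≠ ∞
  finL1g : gridInt d 1 (fun x => |g x|) ≠ ∞

/-- The vertex `ε k ∈ ε ℤ^d` of the grid. -/
def vert (d : ℕ) (ε : ℝ) (k : Fin d → ℤ) : Pt d := WithLp.toLp 2 (fun i => ε * k i)

/-- `v` is the piecewise-linear interpolation `ũ` of `u`: on each edge of the grid it is the
linear interpolation of the values of `u` at the two endpoints. -/
def IsInterp (d : ℕ) (ε : ℝ) (u v : Pt d → ℝ) : Prop :=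
  ∀ (k : Fin d → ℤ) (j : Fin d) (t : ℝ), t ∈ Set.Icc (0:ℝ) 1 →
    v ((1 - t) • vert d ε k + t • vert d ε (fun i => if i = j then k i + 1 else k i)) =
      (1 - t) * u (vert d ε k) + t * u (vert d ε (fun i => if i = j then k i + 1 else k i))

/-- The simplex `S_{k,σ}` inside the cube `C_k`. -/
def simplexS (d : ℕ) (ε : ℝ) (k : Fin d → ℤ) (σ : Equiv.Perm (Fin d)) : Set (Pt d) :=
  {x | (∀ i, x i ∈ Set.Icc (ε * k i) (ε * (k i + 1))) ∧
    ∀ a b : Fin d, a ≤ b → x (σ a) - ε * k (σ a) ≤ x (σ b) - ε * k (σ b)}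

/-- `A` is the piecewise-affine extension `𝒜u` of `u`: it agrees with `u` on the vertex set
`ε ℤ^d` and is affine on each simplex `S_{k,σ}`. -/
def IsAffExt (d : ℕ) (ε : ℝ) (u A : Pt d → ℝ) : Prop :=
  (∀ k : Fin d → ℤ, A (vert d ε k) = u (vert d ε k)) ∧
  ∀ (k : Fin d → ℤ) (σ : Equiv.Perm (Fin d)), ∃ (L : Pt d →L[ℝ] ℝ) (c : ℝ),
    ∀ x ∈ simplexS d ε k σ, A x = L x + c

/-- The Gagliardo–Nirenberg quotient `Q_{q,𝒢_ε^d}(u)` (with edge derivative `g`),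
as a value in `[0,∞]`. -/
def Qgrid (d : ℕ) (ε q : ℝ) (u g : Pt d → ℝ) : ℝ≥0∞ :=
  gridLq d ε q u /
    ((gridL2sq d ε u) ^ (((d : ℝ) + (2 - (d : ℝ)) * (q / 2)) / 2) *
     (gridL2sq d ε g) ^ ((q / 2 - 1) * (d : ℝ) / 2))

/-- The sharp Gagliardo–Nirenberg constant `K_{q,𝒢_ε^d}`, a supremum in `[0,∞]`. -/
def Kgrid (d : ℕ) (ε q : ℝ) : ℝ≥0∞ :=
  ⨆ (u : Pt d → ℝ) (g : Pt d → ℝ) (_ : IsGridH1 d ε u g)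
    (_ : gridL2sq d ε u ≠ 0) (_ : gridL2sq d ε g ≠ 0), Qgrid d ε q u g

/-- The Gagliardo–Nirenberg quotient `Q_{q,ℝ^d}(v)`, as a value in `[0,∞]`. -/
def QReal (d : ℕ) (q : ℝ) (v : Pt d → ℝ) : ℝ≥0∞ :=
  (∫⁻ x, ENNReal.ofReal (|v x| ^ q)) /
    ((∫⁻ x, ENNReal.ofReal ((v x) ^ 2)) ^ (((d : ℝ) + (2 - (d : ℝ)) * (q / 2)) / 2) *
     (∫⁻ x, ENNReal.ofReal (‖fderiv ℝ v x‖ ^ 2)) ^ ((q / 2 - 1) * (d : ℝ) / 2))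

/-- `K^{Lip}_{q,ℝ^d}`: the supremum of the Gagliardo–Nirenberg quotient over nontrivial
locally Lipschitz functions on `ℝ^d` with finite norms. -/
def KLip (d : ℕ) (q : ℝ) : ℝ≥0∞ :=
  ⨆ (v : Pt d → ℝ) (_ : LocallyLipschitz v)
    (_ : (∫⁻ x, ENNReal.ofReal ((v x) ^ 2)) ≠ 0)
    (_ : (∫⁻ x, ENNReal.ofReal ((v x) ^ 2)) ≠ ∞)
    (_ : (∫⁻ x, ENNReal.ofReal (|v x| ^ q)) ≠ ∞)
    (_ : (∫⁻ x, ENNReal.ofReal (‖fderiv ℝ v x‖ ^ 2)) ≠ 0)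
    (_ : (∫⁻ x, ENNReal.ofReal (‖fderiv ℝ v x‖ ^ 2)) ≠ ∞), QReal d q v

/-- The modified action functional `J̃_{λ,𝒢_ε^d}` (of a function `u` with edge derivative `g`). -/
def Jact (d : ℕ) (ε lam p : ℝ) (u g : Pt d → ℝ) : ℝ :=
  (1 / 2) * (gridL2sq d ε g).toReal + lam / (2 * d) * (gridL2sq d ε u).toReal
    - 1 / ((d : ℝ) * p) * (gridLq d ε p u).toReal

/-- Membership in the Nehari manifold `Ñ_{λ,𝒢_ε^d}`. -/
def InNehari (d : ℕ) (ε lam p : ℝ) (u g : Pt d → ℝ) : Prop :=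
  IsGridH1 d ε u g ∧ gridL2sq d ε u ≠ 0 ∧ gridLq d ε p u ≠ ∞ ∧
    (d : ℝ) * (gridL2sq d ε g).toReal + lam * (gridL2sq d ε u).toReal = (gridLq d ε p u).toReal

/-- `u` (with edge derivative `g`) is an action ground state at frequency `lam`. -/
def IsActionGS (d : ℕ) (ε lam p : ℝ) (u g : Pt d → ℝ) : Prop :=
  InNehari d ε lam p u g ∧
    ∀ v h, InNehari d ε lam p v h → Jact d ε lam p u g ≤ Jact d ε lam p v h

/-- The modified energy functional `Ẽ_{𝒢_ε^d}` (of a function `u` with edge derivative `g`). -/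
def Egrid (d : ℕ) (ε p : ℝ) (u g : Pt d → ℝ) : ℝ :=
  (1 / 2) * (gridL2sq d ε g).toReal - 1 / ((d : ℝ) * p) * (gridLq d ε p u).toReal

/-- `u` (with edge derivative `g`) is an energy ground state at mass `m`. -/
def IsEnergyGS (d : ℕ) (ε p m : ℝ) (u g : Pt d → ℝ) : Prop :=
  IsGridH1 d ε u g ∧ (gridL2sq d ε u).toReal = m ∧ gridLq d ε p u ≠ ∞ ∧
    ∀ v h, IsGridH1 d ε v h → (gridL2sq d ε v).toReal = m → gridLq d ε p v ≠ ∞ →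
      Egrid d ε p u g ≤ Egrid d ε p v h

end

/-!
On an edge of length `ε`, both `u` and its interpolation `ũ` stay within `M := ∫_edge |u'|` of
each other, and `M² ≤ ε ∫_edge u'²` by Cauchy–Schwarz. With
`x² ≤ (1 + ε) y² + (1 + 1/ε) (x - y)²` this gives
`∫_edge ũ² ≤ (1 + ε) ∫_edge u² + (ε + ε²) ∫_edge u'²` and the same with `u` and `ũ` swapped; for
`ε ≤ 2/3` the two combine into the claimed bound on every edge. Distinct lines of the grid meet
only in the countable vertex set, which is `μH[1]`-null, so the grid integrals are the sums of
the edge integrals.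
-/

open Set

theorem sq_integral_abs_le_mul_integral_sq {α : Type*} [MeasurableSpace α] {μ : Measure α}
    [IsFiniteMeasure μ] {h : α → ℝ} (hh : Integrable h μ)
    (hh2 : Integrable (fun x => h x ^ 2) μ) :
    (∫ x, |h x| ∂μ) ^ 2 ≤ μ.real univ * ∫ x, h x ^ 2 ∂μ := by
  set M := ∫ x, |h x| ∂μ
  set V := μ.real univ
  set S := ∫ x, h x ^ 2 ∂μ
  have key : ∀ c : ℝ, 2 * c * M ≤ S + c ^ 2 * V := fun c => calc
    2 * c * M = ∫ x, 2 * c * |h x| ∂μ := (integral_const_mul _ _).symm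
    _ ≤ ∫ x, (h x ^ 2 + c ^ 2) ∂μ :=
      integral_mono (hh.abs.const_mul _) (hh2.add (integrable_const _))
        fun x => by nlinarith [sq_nonneg (|h x| - c), sq_abs (h x)]
    _ = S + c ^ 2 * V := by
      rw [integral_add hh2 (integrable_const _), integral_const, smul_eq_mul, mul_comm V]
  rcases measureReal_nonneg.eq_or_lt with hV | hV
  · have hμ : μ = 0 :=
      Measure.measure_univ_eq_zero.1 ((measureReal_eq_zero_iff (measure_ne_top _ _)).1 hV.symm)
    simp [M, V, hμ]
  · have hc := key (M / V)
    have hsq : (M / V) ^ 2 * V = M ^ 2 / V := by field_simp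
    have : M ^ 2 / V ≤ S := by linarith [show 2 * (M / V) * M = 2 * (M ^ 2 / V) by ring]
    rwa [div_le_iff₀ hV, mul_comm] at this

theorem sq_le_one_add_mul_sq_add {x y δ : ℝ} (hδ : 0 < δ) :
    x ^ 2 ≤ (1 + δ) * y ^ 2 + (1 + 1 / δ) * (x - y) ^ 2 := by
  have key : δ * ((1 + δ) * y ^ 2 + (1 + 1 / δ) * (x - y) ^ 2 - x ^ 2) = (δ * y - (x - y)) ^ 2 := by
    field_simp
    ring
  have : 0 ≤ (1 + δ) * y ^ 2 + (1 + 1 / δ) * (x - y) ^ 2 - x ^ 2 :=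
    nonneg_of_mul_nonneg_right (key ▸ sq_nonneg _) hδ
  linarith

theorem setLIntegral_sq_le_of_abs_sub_le {α : Type*} [MeasurableSpace α] {μ : Measure α}
    {s : Set α} (hs : MeasurableSet s) {f g : α → ℝ} {δ M : ℝ} (hδ : 0 < δ)
    (hfg : ∀ x ∈ s, |f x - g x| ≤ M) :
    ∫⁻ x in s, ENNReal.ofReal (f x ^ 2) ∂μ ≤
      ENNReal.ofReal (1 + δ) * ∫⁻ x in s, ENNReal.ofReal (g x ^ 2) ∂μ
        + ENNReal.ofReal ((1 + 1 / δ) * M ^ 2) * μ s := by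
  calc ∫⁻ x in s, ENNReal.ofReal (f x ^ 2) ∂μ
      ≤ ∫⁻ x in s, (ENNReal.ofReal (1 + δ) * ENNReal.ofReal (g x ^ 2)
          + ENNReal.ofReal ((1 + 1 / δ) * M ^ 2)) ∂μ := by
        refine setLIntegral_mono' hs fun x hx => ?_
        rw [← ENNReal.ofReal_mul (by positivity), ← ENNReal.ofReal_add (by positivity)
          (by positivity)]
        have hsq : (f x - g x) ^ 2 ≤ M ^ 2 :=
          sq_le_sq' (abs_le.1 (hfg x hx)).1 (abs_le.1 (hfg x hx)).2
        exact ENNReal.ofReal_le_ofReal ((sq_le_one_add_mul_sq_add (y := g x) hδ).trans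
          (add_le_add_right (mul_le_mul_of_nonneg_left hsq (by positivity)) _))
    _ = _ := by
      rw [lintegral_add_right _ measurable_const, lintegral_const_mul' _ _ ENNReal.ofReal_ne_top,
        setLIntegral_const]

theorem abs_sub_le_integral_abs {w h : ℝ → ℝ} {a b : ℝ} (hh : IntegrableOn h (Ioc a b))
    (hw : ∀ s ∈ Icc a b, ∀ t ∈ Icc a b, w t - w s = ∫ r in s..t, h r)
    {s t : ℝ} (hs : s ∈ Icc a b) (ht : t ∈ Icc a b) :
    |w t - w s| ≤ ∫ r in Ioc a b, |h r| := by
  rw [hw s hs t ht]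
  refine (intervalIntegral.norm_integral_le_integral_norm_uIoc (f := h)).trans ?_
  exact setIntegral_mono_set hh.abs (ae_of_all _ fun r => abs_nonneg _)
    (Ioc_subset_Ioc (le_min hs.1 ht.1) (max_le hs.2 ht.2)).eventuallyLE

theorem abs_interp_sub_le {w : ℝ → ℝ} {a ε M : ℝ} (hε : 0 < ε)
    (hw : ∀ s ∈ Icc a (a + ε), ∀ t ∈ Icc a (a + ε), |w t - w s| ≤ M)
    {t : ℝ} (ht : t ∈ Icc a (a + ε)) :
    |(1 - (t - a) / ε) * w a + (t - a) / ε * w (a + ε) - w t| ≤ M := by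
  set τ := (t - a) / ε
  have hτ0 : 0 ≤ τ := div_nonneg (by linarith [ht.1]) hε.le
  have hτ1 : τ ≤ 1 := (div_le_one hε).2 (by linarith [ht.2])
  have ha := hw t ht a (left_mem_Icc.2 (by linarith))
  have hb := hw t ht (a + ε) (right_mem_Icc.2 (by linarith))
  calc |(1 - τ) * w a + τ * w (a + ε) - w t|
      = |(1 - τ) * (w a - w t) + τ * (w (a + ε) - w t)| := by ring_nf
    _ ≤ (1 - τ) * |w a - w t| + τ * |w (a + ε) - w t| := by
      refine (abs_add_le _ _).trans_eq ?_
      rw [abs_mul, abs_mul, abs_of_nonneg (by linarith), abs_of_nonneg hτ0]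
    _ ≤ (1 - τ) * M + τ * M := by gcongr
    _ = M := by ring

theorem setLIntegral_sq_le_of_abs_sub_le_integral_abs {f g h : ℝ → ℝ} {a ε : ℝ} (hε : 0 < ε)
    (hh : IntegrableOn h (Ioc a (a + ε)))
    (hfg : ∀ t ∈ Ioc a (a + ε), |f t - g t| ≤ ∫ r in Ioc a (a + ε), |h r|) :
    ∫⁻ t in Ioc a (a + ε), ENNReal.ofReal (f t ^ 2) ≤
      ENNReal.ofReal (1 + ε) * (∫⁻ t in Ioc a (a + ε), ENNReal.ofReal (g t ^ 2))
        + ENNReal.ofReal (ε + ε ^ 2) * ∫⁻ t in Ioc a (a + ε), ENNReal.ofReal (h t ^ 2) := by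
  set I := Ioc a (a + ε)
  rcases eq_or_ne (∫⁻ t in I, ENNReal.ofReal (h t ^ 2)) ⊤ with hH | hH
  · have : ENNReal.ofReal (ε + ε ^ 2) ≠ 0 := by positivity
    rw [hH, ENNReal.mul_top this]
    exact le_top.trans_eq (add_top _).symm
  have hh2 : IntegrableOn (fun t => h t ^ 2) I :=
    ⟨hh.aestronglyMeasurable.pow 2, (hasFiniteIntegral_iff_ofReal
      (ae_of_all _ fun _ => sq_nonneg _)).2 hH.lt_top⟩
  have hvol : volume I = ENNReal.ofReal ε := by simp [I, Real.volume_Ioc]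
  have hCS := sq_integral_abs_le_mul_integral_sq hh hh2
  rw [measureReal_restrict_apply_univ, measureReal_def, hvol, ENNReal.toReal_ofReal hε.le] at hCS
  refine (setLIntegral_sq_le_of_abs_sub_le measurableSet_Ioc hε hfg).trans
    (add_le_add_right ?_ _)
  rw [hvol, ← ENNReal.ofReal_mul (by positivity),
    ← ofReal_integral_eq_lintegral_ofReal hh2 (ae_of_all _ fun _ => sq_nonneg _),
    ← ENNReal.ofReal_mul (by positivity)]
  refine ENNReal.ofReal_le_ofReal ?_
  calc (1 + 1 / ε) * (∫ r in I, |h r|) ^ 2 * ε = (1 + ε) * (∫ r in I, |h r|) ^ 2 := by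
        field_simp; ring
    _ ≤ (1 + ε) * (ε * ∫ t in I, h t ^ 2) := by gcongr
    _ = (ε + ε ^ 2) * ∫ t in I, h t ^ 2 := by ring

/-- `ε ≤ 2/3` makes `(1 + ε)² ≤ 3`, which absorbs substituting `hLW` into `hWL`. -/
theorem le_add_three_mul_of_le_one_add_mul {W L H : ℝ≥0∞} {ε : ℝ} (hε : 0 < ε) (hε' : ε ≤ 2 / 3)
    (hWL : W ≤ ENNReal.ofReal (1 + ε) * L + ENNReal.ofReal (ε + ε ^ 2) * H)
    (hLW : L ≤ ENNReal.ofReal (1 + ε) * W + ENNReal.ofReal (ε + ε ^ 2) * H) :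
    W ≤ L + ENNReal.ofReal (3 * ε) * (W + H) ∧ L ≤ W + ENNReal.ofReal (3 * ε) * (W + H) := by
  have h3 : ENNReal.ofReal (3 * ε) ≠ 0 := by positivity
  rcases eq_or_ne W ⊤ with rfl | hW
  · simp only [top_add, ENNReal.mul_top h3, add_top, le_top, and_self]
  rcases eq_or_ne H ⊤ with rfl | hH
  · simp only [add_top, ENNReal.mul_top h3, le_top, and_self]
  have hL : L ≠ ⊤ := ne_top_of_le_ne_top (by finiteness) hLW
  lift W to NNReal using hW
  lift L to NNReal using hL
  lift H to NNReal using hH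
  simp only [ENNReal.ofReal, ← ENNReal.coe_mul, ← ENNReal.coe_add, ENNReal.coe_le_coe,
    ← NNReal.coe_le_coe, NNReal.coe_add, NNReal.coe_mul,
    Real.coe_toNNReal _ (by positivity : (0:ℝ) ≤ 1 + ε),
    Real.coe_toNNReal _ (by positivity : (0:ℝ) ≤ ε + ε ^ 2),
    Real.coe_toNNReal _ (by positivity : (0:ℝ) ≤ 3 * ε)] at hWL hLW ⊢
  have := W.coe_nonneg; have := L.coe_nonneg; have := H.coe_nonneg
  constructor
  · nlinarith [mul_le_mul_of_nonneg_left hLW hε.le]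
  · nlinarith

theorem setLIntegral_sq_interp_bounds {w h l : ℝ → ℝ} {a ε : ℝ} (hε : 0 < ε) (hε' : ε ≤ 2 / 3)
    (hh : IntervalIntegrable h volume a (a + ε))
    (hw : ∀ s ∈ Icc a (a + ε), ∀ t ∈ Icc a (a + ε), w t - w s = ∫ r in s..t, h r)
    (hl : ∀ t ∈ Icc a (a + ε), l t = (1 - (t - a) / ε) * w a + (t - a) / ε * w (a + ε)) :
    let I := Ioc a (a + ε)
    let W := ∫⁻ t in I, ENNReal.ofReal (w t ^ 2)
    let L := ∫⁻ t in I, ENNReal.ofReal (l t ^ 2)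
    let H := ∫⁻ t in I, ENNReal.ofReal (h t ^ 2)
    W ≤ L + ENNReal.ofReal (3 * ε) * (W + H) ∧ L ≤ W + ENNReal.ofReal (3 * ε) * (W + H) := by
  have hlw : ∀ t ∈ Ioc a (a + ε), |l t - w t| ≤ ∫ r in Ioc a (a + ε), |h r| := fun t ht => by
    rw [hl t (Ioc_subset_Icc_self ht)]
    exact abs_interp_sub_le hε (fun s hs t ht => abs_sub_le_integral_abs hh.1 hw hs ht)
      (Ioc_subset_Icc_self ht)
  have hwl : ∀ t ∈ Ioc a (a + ε), |w t - l t| ≤ ∫ r in Ioc a (a + ε), |h r| := fun t ht =>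
    abs_sub_comm (l t) (w t) ▸ hlw t ht
  exact le_add_three_mul_of_le_one_add_mul hε hε'
    (setLIntegral_sq_le_of_abs_sub_le_integral_abs hε hh.1 hwl)
    (setLIntegral_sq_le_of_abs_sub_le_integral_abs hε hh.1 hlw)

section GridGeometry

open scoped Function

variable {d : ℕ} {ε : ℝ}

theorem upd_apply (y : Pt d) (j : Fin d) (t : ℝ) (i : Fin d) :
    upd y j t i = if i = j then t else y i := by
  simp [upd, Function.update_apply]

theorem upd_sub_upd (y : Pt d) (j : Fin d) (s t : ℝ) :
    upd y j s - upd y j t = EuclideanSpace.single j (s - t) := by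
  ext i
  by_cases h : i = j <;> simp [upd_apply, h]

theorem isometry_upd (y : Pt d) (j : Fin d) : Isometry (upd y j) :=
  Isometry.of_dist_eq fun s t => by
    rw [dist_eq_norm, upd_sub_upd, PiLp.norm_single, Real.dist_eq, Real.norm_eq_abs]

theorem measurableEmbedding_upd (y : Pt d) (j : Fin d) : MeasurableEmbedding (upd y j) :=
  (isometry_upd y j).isClosedEmbedding.measurableEmbedding

theorem setLIntegral_range_upd (y : Pt d) (j : Fin d) (F : Pt d → ℝ≥0∞) :
    ∫⁻ x in range (upd y j), F x ∂μH[1] = ∫⁻ t, F (upd y j t) := by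
  have hmap : volume.map (upd y j) = μH[1].restrict (range (upd y j)) := by
    rw [← hausdorffMeasure_real]
    exact (isometry_upd y j).map_hausdorffMeasure (Or.inl zero_le_one)
  rw [← hmap]
  exact (measurableEmbedding_upd y j).lintegral_map F

theorem lineSet_eq_iUnion (j : Fin d) :
    lineSet d ε j = ⋃ k : {k : Fin d → ℤ // k j = 0}, range (upd (vert d ε k) j) := by
  ext x
  simp only [lineSet, mem_ofPred_eq, mem_iUnion, mem_range]
  constructor
  · intro hx
    choose n hn using hx
    refine ⟨⟨fun i => if h : i = j then 0 else n i h, by simp⟩, x j, ?_⟩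
    ext i
    by_cases h : i = j
    · subst h; simp [upd_apply]
    · simp [upd_apply, vert, h, hn i h]
  · rintro ⟨k, t, rfl⟩ i hi
    exact ⟨k.1 i, by simp [upd_apply, vert, hi]⟩

theorem pairwise_disjoint_range_upd_vert (hε : ε ≠ 0) (j : Fin d) :
    Pairwise (Disjoint on fun k : {k : Fin d → ℤ // k j = 0} => range (upd (vert d ε k) j)) := by
  intro k k' hkk'
  refine disjoint_left.2 ?_
  rintro x ⟨t, rfl⟩ ⟨t', hx⟩
  refine hkk' (Subtype.ext (funext fun i => ?_))
  by_cases h : i = j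
  · rw [h, k.2, k'.2]
  · have := congrArg (· i) hx
    simp only [upd_apply, vert, h, if_false] at this
    exact_mod_cast (mul_left_cancel₀ hε this).symm

theorem setLIntegral_lineSet (hε : ε ≠ 0) (j : Fin d) (F : Pt d → ℝ≥0∞) :
    ∫⁻ x in lineSet d ε j, F x ∂μH[1]
      = ∑' k : {k : Fin d → ℤ // k j = 0}, ∫⁻ t, F (upd (vert d ε k) j t) := by
  rw [lineSet_eq_iUnion,
    lintegral_iUnion (fun k => (measurableEmbedding_upd _ j).measurableSet_range)
      (pairwise_disjoint_range_upd_vert hε j)]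
  exact tsum_congr fun k => setLIntegral_range_upd _ j F

theorem measurableSet_lineSet (j : Fin d) : MeasurableSet (lineSet d ε j) := by
  rw [lineSet_eq_iUnion]
  exact .iUnion fun k => (measurableEmbedding_upd _ j).measurableSet_range

theorem lineSet_inter_subset_range_vert {j j' : Fin d} (h : j ≠ j') :
    lineSet d ε j ∩ lineSet d ε j' ⊆ range (vert d ε) := by
  rintro x ⟨hx, hx'⟩
  have hx'' : ∀ i, ∃ n : ℤ, x i = ε * n := fun i =>
    if hi : i = j then hx' i (hi ▸ h) else hx i hi
  choose n hn using hx''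
  exact ⟨n, by ext i; exact (hn i).symm⟩

theorem pairwise_aedisjoint_lineSet :
    Pairwise (AEDisjoint (μH[1] : Measure (Pt d)) on lineSet d ε) := by
  have := Measure.nullSingletonClass_hausdorff (Pt d) one_pos
  exact fun j j' h => measure_mono_null (lineSet_inter_subset_range_vert h)
    ((countable_range _).measure_zero _)

theorem lintegral_eq_tsum_Ioc (hε : 0 < ε) (G : ℝ → ℝ≥0∞) :
    ∫⁻ t, G t = ∑' n : ℤ, ∫⁻ t in Ioc (ε * n) (ε * n + ε), G t := by
  have hcover := iUnion_Ioc_zsmul hε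
  have hdisj := pairwise_disjoint_Ioc_zsmul ε
  simp only [zsmul_eq_mul, mul_comm _ ε, Int.cast_add, Int.cast_one, mul_add_one] at hcover hdisj
  rw [← setLIntegral_univ, ← hcover, lintegral_iUnion (fun _ => measurableSet_Ioc) hdisj]

theorem gridInt_eq_tsum (hε : 0 < ε) (f : Pt d → ℝ) :
    gridInt d ε f = ∑' (j : Fin d) (k : {k : Fin d → ℤ // k j = 0}) (n : ℤ),
      ∫⁻ t in Ioc (ε * n) (ε * n + ε), ENNReal.ofReal (f (upd (vert d ε k) j t)) := by
  rw [gridInt, grid, lintegral_iUnion₀ (fun j => (measurableSet_lineSet j).nullMeasurableSet)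
    pairwise_aedisjoint_lineSet]
  simp only [setLIntegral_lineSet hε.ne', lintegral_eq_tsum_Ioc hε]

end GridGeometry

section Interpolation

variable {d : ℕ} {ε : ℝ}

theorem vert_update (k : Fin d → ℤ) (j : Fin d) (n : ℤ) :
    vert d ε (Function.update k j n) = upd (vert d ε k) j (ε * n) := by
  ext i
  by_cases h : i = j
  · subst h; simp [upd_apply, vert]
  · simp [upd_apply, vert, h]

theorem sub_smul_upd_add_smul_upd (y : Pt d) (j : Fin d) (τ s s' : ℝ) :
    (1 - τ) • upd y j s + τ • upd y j s' = upd y j ((1 - τ) * s + τ * s') := by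
  ext i
  by_cases h : i = j
  · simp [upd_apply, h]
  · simp [upd_apply, h]; ring

theorem IsInterp.apply_upd_vert (hε : 0 < ε) {u v : Pt d → ℝ} (huv : IsInterp d ε u v)
    (j : Fin d) (k : Fin d → ℤ) (n : ℤ) {t : ℝ} (ht : t ∈ Icc (ε * n) (ε * n + ε)) :
    v (upd (vert d ε k) j t) = (1 - (t - ε * n) / ε) * u (upd (vert d ε k) j (ε * n))
      + (t - ε * n) / ε * u (upd (vert d ε k) j (ε * n + ε)) := by
  set τ := (t - ε * n) / ε
  have hτ : τ ∈ Icc (0 : ℝ) 1 :=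
    ⟨div_nonneg (by linarith [ht.1]) hε.le, (div_le_one hε).2 (by linarith [ht.2])⟩
  have hsucc : (fun i => if i = j then Function.update k j n i + 1 else Function.update k j n i)
      = Function.update k j (n + 1) := by
    funext i
    by_cases h : i = j
    · subst h; simp
    · simp [h]
  have hconv : (1 - τ) * (ε * n) + τ * (ε * ((n + 1 : ℤ) : ℝ)) = t := by
    have hτε : τ * ε = t - ε * n := div_mul_cancel₀ _ hε.ne'
    push_cast
    linear_combination hτε
  have key := huv (Function.update k j n) j τ hτ
  rwa [hsucc, vert_update, vert_update, sub_smul_upd_add_smul_upd, hconv,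
    Int.cast_add, Int.cast_one, mul_add_one] at key

theorem gridInt_le_add_mul_of_forall_edge (hε : 0 < ε) {f₁ f₂ f₃ f₄ : Pt d → ℝ} {c : ℝ≥0∞}
    (h : ∀ (j : Fin d) (k : Fin d → ℤ) (n : ℤ),
      let edgeInt := fun f : Pt d → ℝ =>
        ∫⁻ t in Ioc (ε * n) (ε * n + ε), ENNReal.ofReal (f (upd (vert d ε k) j t))
      edgeInt f₁ ≤ edgeInt f₂ + c * (edgeInt f₃ + edgeInt f₄)) :
    gridInt d ε f₁ ≤ gridInt d ε f₂ + c * (gridInt d ε f₃ + gridInt d ε f₄) := by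
  simp only [gridInt_eq_tsum hε, ← ENNReal.tsum_add, ← ENNReal.tsum_mul_left]
  exact ENNReal.tsum_le_tsum fun j => ENNReal.tsum_le_tsum fun k =>
    ENNReal.tsum_le_tsum fun n => h j k.1 n

end Interpolation

/-- The absolute-value inequality `|‖u‖² − ‖ũ‖²| ≤ 3ε(‖u‖² + ‖u'‖²)` is expressed by the two
one-sided inequalities in `[0,∞]`. -/
theorem stmt_2_general (d : ℕ) :
    ∃ ε₀ : ℝ, 0 < ε₀ ∧ ε₀ ≤ 1 ∧ ∀ ε : ℝ, 0 < ε → ε < ε₀ →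
      ∀ u g v : Pt d → ℝ, IsGridH1 d ε u g → IsInterp d ε u v →
        gridL2sq d ε u ≤ gridL2sq d ε v
            + ENNReal.ofReal (3 * ε) * (gridL2sq d ε u + gridL2sq d ε g) ∧
        gridL2sq d ε v ≤ gridL2sq d ε u
            + ENNReal.ofReal (3 * ε) * (gridL2sq d ε u + gridL2sq d ε g) := by
  refine ⟨2 / 3, by norm_num, by norm_num, fun ε hε hε₀ u g v hu huv => ?_⟩
  have hedge (j : Fin d) (k : Fin d → ℤ) (n : ℤ) := by
    have hk : ∀ i, i ≠ j → ∃ m : ℤ, vert d ε k i = ε * m := fun i _ => ⟨k i, rfl⟩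
    have hint := hu.intInt j _ hk n
    have hftc := hu.ftc j _ hk n
    rw [mul_add_one] at hint hftc
    exact setLIntegral_sq_interp_bounds hε hε₀.le hint hftc fun t ht =>
      huv.apply_upd_vert hε j k n ht
  exact ⟨gridInt_le_add_mul_of_forall_edge hε fun j k n => (hedge j k n).1,
    gridInt_le_add_mul_of_forall_edge hε fun j k n => (hedge j k n).2⟩

/-- Lemma 4.2. The absolute-value inequality
`|‖u‖² − ‖ũ‖²| ≤ 3ε(‖u‖² + ‖u'‖²)` is expressed by the two one-sided inequalities
in `[0,∞]` (which in particular force `‖ũ‖²` to be finite). -/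
theorem stmt_2 (d : ℕ) (hd : 2 ≤ d) :
    ∃ ε₀ : ℝ, 0 < ε₀ ∧ ε₀ ≤ 1 ∧ ∀ ε : ℝ, 0 < ε → ε < ε₀ →
      ∀ u g v : Pt d → ℝ, IsGridH1 d ε u g → IsInterp d ε u v →
        gridL2sq d ε u ≤ gridL2sq d ε v
            + ENNReal.ofReal (3 * ε) * (gridL2sq d ε u + gridL2sq d ε g) ∧
        gridL2sq d ε v ≤ gridL2sq d ε u
            + ENNReal.ofReal (3 * ε) * (gridL2sq d ε u + gridL2sq d ε g) :=
  stmt_2_general d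
end

section
/- Let d ≥ 2. There exists ε₀ > 0 such that for every ε ∈ (0, ε₀) and every H¹(𝒢_ε^d)-function u: ∫_{ℝ^d} (𝒜u)² dx ≤ 2^d (d+1) ε^{d−1} ( ‖u‖²_{L²(𝒢_ε^d)} + ε ‖u'‖²_{L²(𝒢_ε^d)} ). (This is estimate (38) of Lemma 4.4.) -/
open MeasureTheory ENNReal

/-!
On each cube `∏ᵢ [ε kᵢ, ε (kᵢ + 1)]`, every point lies in one of the simplices `S_{k,σ}` and is a
convex combination of the vertices of that simplex; `𝒜u` is affine there, so by convexity of the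
square `(𝒜u)²` is at most `u²` at one of these vertices, hence at most the sum of `u²` over the `2^d`
corners of the cube. Integrating, `∫ (𝒜u)² ≤ 2^d ε^d ∑_v u(v)²`.

Each vertex value is controlled by the edge leaving it in a fixed direction: writing
`u(a) = u(t) - ∫ₐᵗ u'` and using Cauchy–Schwarz, `u(a)² ≤ (2/ε) ∫_e u² + 2ε ∫_e u'²`. These edges
are disjoint, so `∑_v u(v)² ≤ (2/ε) ‖u‖² + 2ε ‖u'‖²` and altogether
`∫ (𝒜u)² ≤ 2^(d+1) ε^(d-1) (‖u‖² + ε² ‖u'‖²)`, which gives the claim for `ε < 1`.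
-/

open Set

lemma sq_lintegral_le_measure_univ_mul {α : Type*} [MeasurableSpace α] (μ : Measure α)
    {f : α → ℝ≥0∞} (hf : AEMeasurable f μ) :
    (∫⁻ x, f x ∂μ) ^ 2 ≤ μ univ * ∫⁻ x, f x ^ 2 ∂μ := by
  have h := ENNReal.lintegral_mul_le_Lp_mul_Lq μ Real.HolderConjugate.two_two
    (f := fun _ => 1) aemeasurable_const hf
  simp only [Pi.mul_apply, one_mul, one_pow, lintegral_const, ENNReal.rpow_two] at h
  calc (∫⁻ x, f x ∂μ) ^ 2
      ≤ ((μ univ) ^ (1 / 2 : ℝ) * (∫⁻ x, f x ^ 2 ∂μ) ^ (1 / 2 : ℝ)) ^ 2 := by gcongr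
    _ = μ univ * ∫⁻ x, f x ^ 2 ∂μ := by
        rw [mul_pow, ← ENNReal.rpow_natCast, ← ENNReal.rpow_natCast, ← ENNReal.rpow_mul,
          ← ENNReal.rpow_mul]
        norm_num

lemma ofReal_sq_intervalIntegral_abs_le {G : ℝ → ℝ} {a b : ℝ} (hab : a ≤ b)
    (hG : IntervalIntegrable G volume a b) :
    ENNReal.ofReal ((∫ r in a..b, |G r|) ^ 2) ≤
      ENNReal.ofReal (b - a) * ∫⁻ t in Ioc a b, ENNReal.ofReal (G t ^ 2) := by
  have hG' := intervalIntegrable_iff_integrableOn_Ioc_of_le hab |>.1 hG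
  rw [ENNReal.ofReal_pow (intervalIntegral.integral_nonneg hab fun _ _ => abs_nonneg _),
    intervalIntegral.integral_of_le hab,
    ofReal_integral_eq_lintegral_ofReal hG'.abs (ae_of_all _ fun _ => abs_nonneg _)]
  simpa [← ENNReal.ofReal_pow (abs_nonneg _)] using
    sq_lintegral_le_measure_univ_mul _ hG'.aemeasurable.abs.ennreal_ofReal

lemma sq_le_of_eq_intervalIntegral {f G : ℝ → ℝ} {a b t : ℝ}
    (hG : IntervalIntegrable G volume a b) (ht : t ∈ Ioc a b)
    (hftc : f t - f a = ∫ r in a..t, G r) :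
    f a ^ 2 ≤ 2 * f t ^ 2 + 2 * (∫ r in a..b, |G r|) ^ 2 := by
  set I := ∫ r in a..t, G r
  have hI : I ^ 2 ≤ (∫ r in a..b, |G r|) ^ 2 := sq_le_sq.2 <| (le_abs_self _).trans' <|
    (intervalIntegral.abs_integral_le_integral_abs ht.1.le).trans <|
      intervalIntegral.integral_mono_interval le_rfl ht.1.le ht.2
        (ae_of_all _ fun _ => abs_nonneg _) hG.abs
  rw [show f a = f t - I by linarith]
  nlinarith [sq_nonneg (f t + I)]

lemma ofReal_sq_le_of_eq_intervalIntegral {f G : ℝ → ℝ} {a b : ℝ} (hab : a < b)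
    (hG : IntervalIntegrable G volume a b) (hftc : ∀ t ∈ Ioc a b, f t - f a = ∫ r in a..t, G r) :
    ENNReal.ofReal (f a ^ 2) ≤
      ENNReal.ofReal (2 / (b - a)) * (∫⁻ t in Ioc a b, ENNReal.ofReal (f t ^ 2)) +
        ENNReal.ofReal (2 * (b - a)) * ∫⁻ t in Ioc a b, ENNReal.ofReal (G t ^ 2) := by
  set B := ∫ r in a..b, |G r|
  set ℓ := ENNReal.ofReal (b - a)
  have hpoint : ∀ t ∈ Ioc a b,
      ENNReal.ofReal (f a ^ 2) ≤ 2 * ENNReal.ofReal (f t ^ 2) + 2 * ENNReal.ofReal (B ^ 2) := by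
    intro t ht
    rw [← ENNReal.ofReal_ofNat 2, ← ENNReal.ofReal_mul zero_le_two,
      ← ENNReal.ofReal_mul zero_le_two, ← ENNReal.ofReal_add (by positivity) (by positivity)]
    exact ENNReal.ofReal_le_ofReal (sq_le_of_eq_intervalIntegral hG ht (hftc t ht))
  have hint : ENNReal.ofReal (f a ^ 2) * ℓ ≤
      2 * (∫⁻ t in Ioc a b, ENNReal.ofReal (f t ^ 2)) + 2 * ENNReal.ofReal (B ^ 2) * ℓ := by
    calc ENNReal.ofReal (f a ^ 2) * ℓ = ∫⁻ _ in Ioc a b, ENNReal.ofReal (f a ^ 2) := by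
          rw [setLIntegral_const, Real.volume_Ioc]
      _ ≤ ∫⁻ t in Ioc a b, (2 * ENNReal.ofReal (f t ^ 2) + 2 * ENNReal.ofReal (B ^ 2)) :=
          setLIntegral_mono' measurableSet_Ioc hpoint
      _ = _ := by
          rw [lintegral_add_right _ measurable_const, lintegral_const_mul' _ _ ENNReal.ofNat_ne_top,
            setLIntegral_const, Real.volume_Ioc]
  have hℓ : ℓ ≠ 0 := by simpa [ℓ] using hab
  refine (ENNReal.mul_le_mul_iff_left hℓ ENNReal.ofReal_ne_top).1 (hint.trans ?_)
  have h₁ : ENNReal.ofReal (2 / (b - a)) * ℓ = 2 := by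
    rw [← ENNReal.ofReal_mul (by positivity), div_mul_cancel₀ _ (sub_ne_zero.2 hab.ne'),
      ENNReal.ofReal_ofNat]
  have h₂ : ENNReal.ofReal (2 * (b - a)) = 2 * ℓ := by
    rw [ENNReal.ofReal_mul zero_le_two, ENNReal.ofReal_ofNat]
  calc 2 * (∫⁻ t in Ioc a b, ENNReal.ofReal (f t ^ 2)) + 2 * ENNReal.ofReal (B ^ 2) * ℓ
      ≤ 2 * (∫⁻ t in Ioc a b, ENNReal.ofReal (f t ^ 2)) +
          2 * (ℓ * ∫⁻ t in Ioc a b, ENNReal.ofReal (G t ^ 2)) * ℓ := by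
        gcongr
        exact ofReal_sq_intervalIntegral_abs_le hab.le hG
    _ = _ := by rw [add_mul, mul_right_comm (ENNReal.ofReal (2 / (b - a))), h₁, h₂]; ring

namespace CubicGrid

variable {d : ℕ} {ε : ℝ} {u g A : Pt d → ℝ}

lemma isometry_upd (y : Pt d) (j : Fin d) : Isometry (upd y j) := by
  refine Isometry.of_dist_eq fun s t => ?_
  rw [EuclideanSpace.dist_eq, Finset.sum_eq_single j (fun i _ hi => by simp [upd, hi]) (by simp)]
  simp [upd]

lemma setLIntegral_image_upd (y : Pt d) (j : Fin d) {s : Set ℝ} (hs : MeasurableSet s)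
    (f : Pt d → ℝ≥0∞) :
    ∫⁻ x in upd y j '' s, f x ∂μH[1] = ∫⁻ t in s, f (upd y j t) := by
  have hφ := isometry_upd y j
  have hemb := hφ.isClosedEmbedding.measurableEmbedding
  calc ∫⁻ x in upd y j '' s, f x ∂μH[1]
      = ∫⁻ x in upd y j '' s, f x ∂(Measure.map (upd y j) volume) := by
        rw [← hausdorffMeasure_real, hφ.map_hausdorffMeasure (.inl zero_le_one),
          Measure.restrict_restrict (hemb.measurableSet_image' hs),
          inter_eq_left.2 (image_subset_range _ _)]
    _ = ∫⁻ t in upd y j ⁻¹' (upd y j '' s), f (upd y j t) := by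
        rw [hemb.restrict_map, hemb.lintegral_map]
    _ = ∫⁻ t in s, f (upd y j t) := by rw [hemb.injective.preimage_image]

lemma mem_Ioc_mul_iff_ceil (hε : 0 < ε) {t : ℝ} {n : ℤ} :
    t ∈ Ioc (ε * n) (ε * (n + 1)) ↔ ⌈t / ε⌉ = n + 1 := by
  rw [Int.ceil_eq_iff, lt_div_iff₀ hε, div_le_iff₀ hε, mem_Ioc]
  push_cast
  constructor <;> rintro ⟨h₁, h₂⟩ <;> constructor <;> linarith

-- Half-open, so that the edges in a fixed direction are pairwise disjoint.
def edge (d : ℕ) (ε : ℝ) (j : Fin d) (v : Fin d → ℤ) : Set (Pt d) :=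
  {x | (∀ i, i ≠ j → x i = ε * v i) ∧ x j ∈ Ioc (ε * v j) (ε * (v j + 1))}

lemma edge_eq_image (j : Fin d) (v : Fin d → ℤ) :
    edge d ε j v = upd (vert d ε v) j '' Ioc (ε * v j) (ε * (v j + 1)) := by
  ext x
  constructor
  · rintro ⟨hx, hxj⟩
    refine ⟨x j, hxj, ?_⟩
    ext i
    by_cases hi : i = j
    · subst hi; simp [upd]
    · simp [upd, hi, hx i hi, vert]
  · rintro ⟨t, ht, rfl⟩
    exact ⟨fun i hi => by simp [upd, hi, vert], by simpa [upd] using ht⟩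

lemma measurableSet_edge (j : Fin d) (v : Fin d → ℤ) : MeasurableSet (edge d ε j v) := by
  rw [edge_eq_image]
  exact (isometry_upd _ j).isClosedEmbedding.measurableEmbedding.measurableSet_image'
    measurableSet_Ioc

lemma pairwise_disjoint_edge (hε : 0 < ε) (j : Fin d) :
    Pairwise (Function.onFun Disjoint (edge d ε j)) := by
  refine fun v w hvw => disjoint_left.2 fun x ⟨hxv, hxvj⟩ ⟨hxw, hxwj⟩ => hvw (funext fun i => ?_)
  by_cases hi : i = j
  · subst hi
    have := ((mem_Ioc_mul_iff_ceil hε).1 hxvj).symm.trans ((mem_Ioc_mul_iff_ceil hε).1 hxwj)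
    omega
  · exact_mod_cast mul_left_cancel₀ hε.ne' ((hxv i hi).symm.trans (hxw i hi))

lemma tsum_setLIntegral_edge_le_gridInt (hε : 0 < ε) (j : Fin d) (f : Pt d → ℝ≥0∞) :
    ∑' v, ∫⁻ x in edge d ε j v, f x ∂μH[1] ≤ ∫⁻ x in grid d ε, f x ∂μH[1] := by
  rw [← lintegral_iUnion (measurableSet_edge j) (pairwise_disjoint_edge hε j)]
  refine lintegral_mono_set (iUnion_subset fun v x hx => mem_iUnion.2 ⟨j, fun i hi => ?_⟩)
  exact ⟨v i, hx.1 i hi⟩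

lemma ofReal_sq_vert_le (hε : 0 < ε) (H : IsGridH1 d ε u g) (j : Fin d) (v : Fin d → ℤ) :
    ENNReal.ofReal (u (vert d ε v) ^ 2) ≤
      ENNReal.ofReal (2 / ε) * (∫⁻ x in edge d ε j v, ENNReal.ofReal (u x ^ 2) ∂μH[1]) +
        ENNReal.ofReal (2 * ε) * ∫⁻ x in edge d ε j v, ENNReal.ofReal (g x ^ 2) ∂μH[1] := by
  rw [edge_eq_image, setLIntegral_image_upd _ _ measurableSet_Ioc,
    setLIntegral_image_upd _ _ measurableSet_Ioc]
  set y := vert d ε v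
  have hy : ∀ i, i ≠ j → ∃ m : ℤ, y i = ε * m := fun i _ => ⟨v i, rfl⟩
  have hlen : ε * (v j + 1) - ε * v j = ε := by ring
  have hupd : upd y j (ε * v j) = y := by simp [upd, y, vert]
  have h1d := ofReal_sq_le_of_eq_intervalIntegral (f := fun t => u (upd y j t))
    (G := fun t => g (upd y j t))
    (by linarith : ε * v j < ε * (v j + 1)) (H.intInt j y hy (v j))
    fun t ht => H.ftc j y hy (v j) _ ⟨le_rfl, by linarith⟩ t (Ioc_subset_Icc_self ht)
  simpa only [hlen, hupd] using h1d

lemma tsum_ofReal_sq_vert_le (hε : 0 < ε) (H : IsGridH1 d ε u g) (j : Fin d) :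
    ∑' v, ENNReal.ofReal (u (vert d ε v) ^ 2) ≤
      ENNReal.ofReal (2 / ε) * gridL2sq d ε u + ENNReal.ofReal (2 * ε) * gridL2sq d ε g := by
  calc ∑' v, ENNReal.ofReal (u (vert d ε v) ^ 2)
      ≤ ∑' v, (ENNReal.ofReal (2 / ε) *
            (∫⁻ x in edge d ε j v, ENNReal.ofReal (u x ^ 2) ∂μH[1]) +
          ENNReal.ofReal (2 * ε) * ∫⁻ x in edge d ε j v, ENNReal.ofReal (g x ^ 2) ∂μH[1]) :=
        ENNReal.tsum_le_tsum fun v => ofReal_sq_vert_le hε H j v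
    _ = ENNReal.ofReal (2 / ε) *
            (∑' v, ∫⁻ x in edge d ε j v, ENNReal.ofReal (u x ^ 2) ∂μH[1]) +
          ENNReal.ofReal (2 * ε) * ∑' v, ∫⁻ x in edge d ε j v, ENNReal.ofReal (g x ^ 2) ∂μH[1] := by
        rw [ENNReal.tsum_add, ENNReal.tsum_mul_left, ENNReal.tsum_mul_left]
    _ ≤ _ := by gcongr <;> exact tsum_setLIntegral_edge_le_gridInt hε j _

def cubeCorner (k : Fin d → ℤ) (δ : Fin d → Bool) : Fin d → ℤ :=
  fun i => k i + if δ i then 1 else 0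

-- The vertices of `simplexS d ε k σ`: starting from `ε k`, raise the coordinates
-- `σ m, …, σ (d - 1)` by `ε` (every `m ≥ d` gives `ε k` itself).
def kuhnVertex (ε : ℝ) (k : Fin d → ℤ) (σ : Equiv.Perm (Fin d)) (m : ℕ) : Pt d :=
  vert d ε (cubeCorner k fun i => decide (m ≤ σ.symm i))

lemma kuhnVertex_apply (k : Fin d → ℤ) (σ : Equiv.Perm (Fin d)) (m : ℕ) (i : Fin d) :
    kuhnVertex ε k σ m i = ε * k i + ε * if m ≤ σ.symm i then 1 else 0 := by
  simp only [kuhnVertex, vert, cubeCorner, decide_eq_true_eq]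
  split_ifs <;> push_cast <;> ring

lemma kuhnVertex_mem_simplexS (hε : 0 ≤ ε) (k : Fin d → ℤ) (σ : Equiv.Perm (Fin d)) (m : ℕ) :
    kuhnVertex ε k σ m ∈ simplexS d ε k σ := by
  refine ⟨fun i => ?_, fun a b hab => ?_⟩
  · rw [kuhnVertex_apply]
    split_ifs <;> constructor <;> linarith
  · simp only [kuhnVertex_apply, Equiv.symm_apply_apply, add_sub_cancel_left]
    have : (a : ℕ) ≤ b := hab
    split_ifs <;> first | omega | linarith

lemma exists_perm_mem_simplexS (k : Fin d → ℤ) {x : Pt d}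
    (hx : ∀ i, x i ∈ Icc (ε * k i) (ε * (k i + 1))) : ∃ σ, x ∈ simplexS d ε k σ :=
  ⟨Tuple.sort fun i => x i - ε * k i, hx,
    fun _ _ hab => Tuple.monotone_sort (fun i => x i - ε * k i) hab⟩

lemma eq_sum_smul_kuhnVertex (hε : ε ≠ 0) (k : Fin d → ℤ) (σ : Equiv.Perm (Fin d)) {x : Pt d}
    {T : ℕ → ℝ} (hT₀ : T 0 = 0) (hT : ∀ a : Fin d, T (a + 1) = (x (σ a) - ε * k (σ a)) / ε)
    (hT₁ : T (d + 1) = 1) :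
    x = ∑ m ∈ Finset.range (d + 1), (T (m + 1) - T m) • kuhnVertex ε k σ m := by
  have hpartial : ∀ a, ∑ m ∈ Finset.range a, (T (m + 1) - T m) = T a := fun a => by
    rw [Finset.sum_range_sub, hT₀, sub_zero]
  ext i
  obtain ⟨a, rfl⟩ := σ.surjective i
  have hfilter : (Finset.range (d + 1)).filter (· ≤ (a : ℕ)) = Finset.range (a + 1) := by
    ext m; simp only [Finset.mem_filter, Finset.mem_range]; omega
  have hsum : ∑ m ∈ Finset.range (d + 1), (T (m + 1) - T m) * (if m ≤ (a : ℕ) then 1 else 0) =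
      T (a + 1) := by
    simp only [mul_ite, mul_one, mul_zero]
    rw [← Finset.sum_filter, hfilter, hpartial]
  simp only [WithLp.ofLp_sum, Finset.sum_apply, PiLp.smul_apply, smul_eq_mul, kuhnVertex_apply,
    Equiv.symm_apply_apply, mul_add, Finset.sum_add_distrib, mul_left_comm _ ε]
  rw [← Finset.mul_sum, ← Finset.mul_sum, ← Finset.sum_mul, hpartial, hT₁, hsum, hT a]
  field_simp
  ring

lemma simplexS_subset_convexHull (hε : 0 < ε) (k : Fin d → ℤ) (σ : Equiv.Perm (Fin d)) :
    simplexS d ε k σ ⊆ convexHull ℝ (range (kuhnVertex ε k σ)) := by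
  rintro x ⟨hcube, hmono⟩
  -- The barycentric weights of `x` are the gaps in `0 ≤ s 0 ≤ … ≤ s (d - 1) ≤ 1`.
  set s : ℕ → ℝ := fun m => if h : m < d then (x (σ ⟨m, h⟩) - ε * k (σ ⟨m, h⟩)) / ε else 1
  have hs_nonneg : 0 ≤ s 0 := by
    simp only [s]
    split_ifs with h
    · exact div_nonneg (sub_nonneg.2 (hcube _).1) hε.le
    · exact zero_le_one
  have hs_mono : ∀ m, s m ≤ s (m + 1) := by
    intro m
    simp only [s]
    split_ifs with h₁ h₂ h₂
    · exact div_le_div_of_nonneg_right (hmono _ _ (Fin.mk_le_mk.2 m.le_succ)) hε.le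
    · rw [div_le_one hε]; linarith [(hcube (σ ⟨m, h₁⟩)).2]
    · omega
    · exact le_rfl
  set T : ℕ → ℝ := fun | 0 => 0 | m + 1 => s m
  have hT_mono : Monotone T := monotone_nat_of_le_succ fun
    | 0 => hs_nonneg
    | m + 1 => hs_mono m
  have hT₁ : T (d + 1) = 1 := dif_neg (lt_irrefl d)
  rw [eq_sum_smul_kuhnVertex hε.ne' k σ rfl (fun a => dif_pos a.2) hT₁]
  refine (convex_convexHull ℝ _).sum_mem (fun m _ => sub_nonneg.2 (hT_mono m.le_succ)) ?_
    fun m _ => subset_convexHull ℝ _ (mem_range_self m)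
  rw [Finset.sum_range_sub, hT₁, sub_zero]

lemma sq_le_sum_cubeCorner (hε : 0 < ε) (hA : IsAffExt d ε u A) (k : Fin d → ℤ) {x : Pt d}
    (hx : ∀ i, x i ∈ Icc (ε * k i) (ε * (k i + 1))) :
    A x ^ 2 ≤ ∑ δ, u (vert d ε (cubeCorner k δ)) ^ 2 := by
  obtain ⟨σ, hxσ⟩ := exists_perm_mem_simplexS k hx
  obtain ⟨L, c, hLc⟩ := hA.2 k σ
  have hconv : ConvexOn ℝ univ fun y : Pt d => (L y + c) ^ 2 :=
    (Even.convexOn_pow even_two).comp_affineMap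
      ((L : Pt d →ₗ[ℝ] ℝ).toAffineMap + AffineMap.const ℝ (Pt d) c)
  obtain ⟨_, ⟨m, rfl⟩, hm⟩ :=
    hconv.exists_ge_of_mem_convexHull (subset_univ _) (simplexS_subset_convexHull hε k σ hxσ)
  calc A x ^ 2 = (L x + c) ^ 2 := by rw [hLc x hxσ]
    _ ≤ (L (kuhnVertex ε k σ m) + c) ^ 2 := hm
    _ = u (kuhnVertex ε k σ m) ^ 2 := by
        rw [← hLc _ (kuhnVertex_mem_simplexS hε.le k σ m), kuhnVertex, hA.1]
    _ ≤ ∑ δ, u (vert d ε (cubeCorner k δ)) ^ 2 :=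
        Finset.single_le_sum (f := fun δ => u (vert d ε (cubeCorner k δ)) ^ 2)
          (fun δ _ => sq_nonneg _) (Finset.mem_univ _)

lemma tsum_sum_cubeCorner (f : (Fin d → ℤ) → ℝ≥0∞) :
    ∑' k, ∑ δ, f (cubeCorner k δ) = 2 ^ d * ∑' v, f v := by
  rw [Summable.tsum_finsetSum fun _ _ => ENNReal.summable]
  have htrans : ∀ δ, ∑' k, f (cubeCorner k δ) = ∑' v, f v := fun δ =>
    (Equiv.addRight fun i => if δ i then (1 : ℤ) else 0).tsum_eq f
  simp [htrans]

def cube (d : ℕ) (ε : ℝ) (k : Fin d → ℤ) : Set (Pt d) :=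
  WithLp.ofLp ⁻¹' univ.pi fun i => Ioc (ε * k i) (ε * (k i + 1))

lemma measurableSet_cube (k : Fin d → ℤ) : MeasurableSet (cube d ε k) :=
  (MeasurableSet.univ_pi fun _ => measurableSet_Ioc).preimage (by fun_prop)

lemma volume_cube (k : Fin d → ℤ) : volume (cube d ε k) = ENNReal.ofReal ε ^ d := by
  rw [cube, (PiLp.volume_preserving_ofLp (Fin d)).measure_preimage
    (MeasurableSet.univ_pi fun _ => measurableSet_Ioc).nullMeasurableSet, volume_pi_pi]
  simp [Real.volume_Ioc, mul_add]

lemma mem_cube_ceil (hε : 0 < ε) (x : Pt d) : x ∈ cube d ε fun i => ⌈x i / ε⌉ - 1 := by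
  simp only [cube, mem_preimage, mem_univ_pi]
  exact fun i => (mem_Ioc_mul_iff_ceil hε).2 (sub_add_cancel _ _).symm

lemma lintegral_le_of_le_on_cube (hε : 0 < ε) {F : Pt d → ℝ≥0∞} {c : (Fin d → ℤ) → ℝ≥0∞}
    (hF : ∀ k, ∀ x ∈ cube d ε k, F x ≤ c k) :
    ∫⁻ x, F x ≤ ENNReal.ofReal ε ^ d * ∑' k, c k := by
  have hpoint : ∀ x, F x ≤ ∑' k, (cube d ε k).indicator (fun _ => c k) x := by
    intro x
    set k₀ : Fin d → ℤ := fun i => ⌈x i / ε⌉ - 1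
    have hx : x ∈ cube d ε k₀ := mem_cube_ceil hε x
    calc F x ≤ c k₀ := hF k₀ x hx
      _ = (cube d ε k₀).indicator (fun _ => c k₀) x := (indicator_of_mem hx fun _ => c k₀).symm
      _ ≤ ∑' k, (cube d ε k).indicator (fun _ => c k) x := ENNReal.le_tsum _
  calc ∫⁻ x, F x ≤ ∫⁻ x, ∑' k, (cube d ε k).indicator (fun _ => c k) x := lintegral_mono hpoint
    _ = ∑' k, c k * volume (cube d ε k) := by
        rw [lintegral_tsum fun k =>
          (measurable_const.indicator (measurableSet_cube k)).aemeasurable]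
        simp_rw [lintegral_indicator_const (measurableSet_cube _)]
    _ = ENNReal.ofReal ε ^ d * ∑' k, c k := by
        simp_rw [volume_cube, ← ENNReal.tsum_mul_left, mul_comm]

lemma lintegral_sq_le_tsum_vert (hε : 0 < ε) (hA : IsAffExt d ε u A) :
    ∫⁻ x, ENNReal.ofReal (A x ^ 2) ≤
      ENNReal.ofReal ε ^ d * (2 ^ d * ∑' v, ENNReal.ofReal (u (vert d ε v) ^ 2)) := by
  rw [← tsum_sum_cubeCorner fun v => ENNReal.ofReal (u (vert d ε v) ^ 2)]
  refine lintegral_le_of_le_on_cube hε fun k x hx => ?_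
  rw [← ENNReal.ofReal_sum_of_nonneg fun _ _ => sq_nonneg _]
  exact ENNReal.ofReal_le_ofReal <|
    sq_le_sum_cubeCorner hε hA k fun i => Ioc_subset_Icc_self (hx i (mem_univ i))

lemma lintegral_sq_le_of_isAffExt (hε : 0 < ε) (H : IsGridH1 d ε u g) (hA : IsAffExt d ε u A)
    (j : Fin d) :
    ∫⁻ x, ENNReal.ofReal (A x ^ 2) ≤ ENNReal.ofReal (2 ^ (d + 1) * ε ^ (d - 1)) *
      (gridL2sq d ε u + ENNReal.ofReal (ε ^ 2) * gridL2sq d ε g) := by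
  obtain ⟨n, rfl⟩ : ∃ n, d = n + 1 := ⟨d - 1, by have := j.pos; omega⟩
  have hcoef : ∀ r, 0 ≤ r → ENNReal.ofReal ε ^ (n + 1) * (2 ^ (n + 1) * ENNReal.ofReal r) =
      ENNReal.ofReal (ε ^ (n + 1) * 2 ^ (n + 1) * r) := fun r hr => by
    rw [ENNReal.ofReal_mul (by positivity), ENNReal.ofReal_mul (by positivity),
      ENNReal.ofReal_pow hε.le, ENNReal.ofReal_pow zero_le_two, ENNReal.ofReal_ofNat, mul_assoc]
  calc ∫⁻ x, ENNReal.ofReal (A x ^ 2)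
      ≤ ENNReal.ofReal ε ^ (n + 1) *
          (2 ^ (n + 1) * ∑' v, ENNReal.ofReal (u (vert (n + 1) ε v) ^ 2)) :=
        lintegral_sq_le_tsum_vert hε hA
    _ ≤ ENNReal.ofReal ε ^ (n + 1) * (2 ^ (n + 1) *
          (ENNReal.ofReal (2 / ε) * gridL2sq (n + 1) ε u +
            ENNReal.ofReal (2 * ε) * gridL2sq (n + 1) ε g)) := by
        gcongr
        exact tsum_ofReal_sq_vert_le hε H j
    _ = ENNReal.ofReal (ε ^ (n + 1) * 2 ^ (n + 1) * (2 / ε)) * gridL2sq (n + 1) ε u +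
          ENNReal.ofReal (ε ^ (n + 1) * 2 ^ (n + 1) * (2 * ε)) * gridL2sq (n + 1) ε g := by
        rw [← hcoef _ (by positivity), ← hcoef _ (by positivity)]
        ring
    _ = _ := by
        rw [mul_add, ← mul_assoc (ENNReal.ofReal _), ← ENNReal.ofReal_mul (by positivity),
          Nat.add_sub_cancel]
        congr 3 <;> field_simp <;> ring

end CubicGrid

/-- estimate (38) of Lemma 4.4. -/
theorem stmt_5 (d : ℕ) (hd : 2 ≤ d) :
    ∃ ε₀ : ℝ, 0 < ε₀ ∧ ∀ ε : ℝ, 0 < ε → ε < ε₀ →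
      ∀ u g A : Pt d → ℝ, IsGridH1 d ε u g → IsAffExt d ε u A →
        (∫⁻ x, ENNReal.ofReal ((A x) ^ 2)) ≤
          ENNReal.ofReal (2 ^ d * ((d : ℝ) + 1) * ε ^ (d - 1)) *
            (gridL2sq d ε u + ENNReal.ofReal ε * gridL2sq d ε g) := by
  refine ⟨1, one_pos, fun ε hε hε₁ u g A H hA => ?_⟩
  refine (CubicGrid.lintegral_sq_le_of_isAffExt hε H hA ⟨0, by omega⟩).trans ?_
  have hd' : (2 : ℝ) ≤ d + 1 := by norm_cast; omega
  gcongr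
  · rw [pow_succ]
    gcongr
  · nlinarith
end
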